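/- arXiv:0903.1742 — 6 statements merged into one kernel-verified Lean document; each statement's English description precedes it below -/
import Mathlib

section
/- Let t be a positive integer and let x, y be nonzero integers with 0 < P_t(x,y) ≤ t^2. If ω_j ∈ {1, i, −1, −i} attains the minimum of |i^k − η(x,y)/ξ(x,y)| over k = 0, 1, 2, 3, then |ω_j − η(x,y)/ξ(x,y)| < (π/12)·|z(x,y)|; in particular (x,y) is related to exactly one fourth root of unity. -/
/-!
Write `w = η/ξ`. Since `δ` and `ε` have the same modulus and `x + i√t y` is the conjugate of
`x - i√t y`, `w` lies on the unit circle; and `z = 1 - w⁴ = 8 P_t(x,y) / ξ⁴` with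
`|ξ|⁴ = 4 √(1+t) (x² + t y²)²`. As `x² + t y² ≥ 1 + t` and `P_t(x,y) ≤ t²`, this gives
`|z|² ≤ 4 t⁴ / (1+t)⁵ ≤ 1024/3125`.

Rotating by the nearest fourth root `ω`, put `u = w/ω = a + bi`, so that `|b| ≤ a` and
`z = 1 - u⁴`. On the unit circle `|1 - u|² = 2 - 2a` and `|1 - u⁴|² = 16 a² (1 - a²)`; the bound
on `|z|` then forces `a > 0.979`, and `2 - 2a < (π/12)² · 16 a² (1 - a²)` reduces to
`π² a² (1 + a) > 18`. Uniqueness holds because distinct fourth roots of unity are at distance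
at least `√2`, while both would lie within `π/12 · |z| < 1/2` of `w`.
-/

/-- The quartic form `P_t(x,y) = x^4 + 4t x^3 y - 6t x^2 y^2 - 4t^2 x y^3 + t^2 y^4`. -/
def Pquartic (t x y : ℤ) : ℤ :=
  x ^ 4 + 4 * t * x ^ 3 * y - 6 * t * x ^ 2 * y ^ 2 - 4 * t ^ 2 * x * y ^ 3 + t ^ 2 * y ^ 4

open Complex Real

lemma sq_norm_sub (z w : ℂ) : ‖z - w‖ ^ 2 = (z.re - w.re) ^ 2 + (z.im - w.im) ^ 2 := by
  rw [Complex.sq_norm, normSq_apply]; simp only [sub_re, sub_im]; ring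

lemma mem_fourthRoots_iff {ω : ℂ} : ω ∈ ({1, I, -1, -I} : Set ℂ) ↔ ω ^ 4 = 1 := by
  constructor
  · rintro (rfl | rfl | rfl | rfl) <;> norm_num [I_pow_four, Even.neg_pow]
  · intro h
    have : (ω - 1) * (ω - I) * (ω + 1) * (ω + I) = 0 := by
      linear_combination h + (1 - ω ^ 2) * I_sq
    simp only [mul_eq_zero, sub_eq_zero, add_eq_zero_iff_eq_neg] at this
    simp only [Set.mem_insert_iff, Set.mem_singleton_iff]
    tauto

lemma eq_one_of_pow_four_eq_one_of_norm_one_sub_lt {ζ : ℂ} (hζ : ζ ^ 4 = 1) (h : ‖1 - ζ‖ < 1) :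
    ζ = 1 := by
  rcases mem_fourthRoots_iff.mpr hζ with rfl | rfl | rfl | rfl
  · rfl
  all_goals
    refine absurd h (not_lt.mpr ((one_le_sq_iff₀ (norm_nonneg _)).mp ?_))
    rw [sq_norm_sub]; norm_num

lemma eq_of_pow_four_eq_one_of_norm_sub_lt_half {ω ω' w : ℂ} (hω : ω ^ 4 = 1)
    (hω' : ω' ^ 4 = 1) (h : ‖ω - w‖ < 1 / 2) (h' : ‖ω' - w‖ < 1 / 2) : ω' = ω := by
  have hω1 : ‖ω‖ = 1 := norm_eq_one_of_pow_eq_one hω four_ne_zero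
  have hω0 : ω ≠ 0 := norm_ne_zero_iff.mp (by rw [hω1]; exact one_ne_zero)
  have hζ : ω' / ω = 1 := by
    refine eq_one_of_pow_four_eq_one_of_norm_one_sub_lt (by rw [div_pow, hω, hω', div_one]) ?_
    rw [one_sub_div hω0, norm_div, hω1, div_one]
    linarith [norm_sub_le_norm_sub_add_norm_sub ω w ω', norm_sub_rev w ω']
  exact (div_eq_one_iff_eq hω0).mp hζ

lemma re_sq_add_im_sq_of_norm_eq_one {u : ℂ} (hu : ‖u‖ = 1) : u.re ^ 2 + u.im ^ 2 = 1 := by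
  simpa [hu] using (sq_norm_sub u 0).symm

lemma sq_norm_one_sub_of_norm_eq_one {u : ℂ} (hu : ‖u‖ = 1) : ‖1 - u‖ ^ 2 = 2 - 2 * u.re := by
  rw [sq_norm_sub, one_re, one_im]
  linear_combination re_sq_add_im_sq_of_norm_eq_one hu

lemma sq_norm_one_sub_pow_four_of_norm_eq_one {u : ℂ} (hu : ‖u‖ = 1) :
    ‖1 - u ^ 4‖ ^ 2 = 16 * u.re ^ 2 * (1 - u.re ^ 2) := by
  have him : u.im ^ 2 = 1 - u.re ^ 2 := by linear_combination re_sq_add_im_sq_of_norm_eq_one hu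
  have : ‖1 - u ^ 4‖ ^ 2 = (1 - (u.re ^ 4 - 6 * u.re ^ 2 * u.im ^ 2 + (u.im ^ 2) ^ 2)) ^ 2
      + 16 * u.re ^ 2 * u.im ^ 2 * (u.re ^ 2 - u.im ^ 2) ^ 2 := by
    rw [sq_norm_sub]; simp only [one_re, one_im, pow_succ, pow_zero, one_mul, mul_re, mul_im]; ring
  rw [this, him]; ring

lemma abs_im_le_re_of_norm_one_sub_le {u : ℂ} (hI : ‖1 - u‖ ≤ ‖I - u‖)
    (hnegI : ‖1 - u‖ ≤ ‖-I - u‖) : |u.im| ≤ u.re := by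
  have hI2 := pow_le_pow_left₀ (norm_nonneg _) hI 2
  have hnegI2 := pow_le_pow_left₀ (norm_nonneg _) hnegI 2
  simp only [sq_norm_sub, one_re, one_im, I_re, I_im, neg_re, neg_im] at hI2 hnegI2
  exact abs_le.mpr ⟨by nlinarith, by nlinarith⟩

lemma two_sub_two_mul_lt_pi_sq_mul {a : ℝ} (ha0 : 0 ≤ a) (ha : 1 / 2 ≤ a ^ 2) (ha1 : a < 1)
    (h : 16 * a ^ 2 * (1 - a ^ 2) ≤ 1024 / 3125) :
    2 - 2 * a < (π / 12) ^ 2 * (16 * a ^ 2 * (1 - a ^ 2)) := by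
  have h1a2 : 1 - a ^ 2 ≤ 128 / 3125 := by nlinarith
  have ha2 : (2997 / 3125 : ℝ) ≤ a ^ 2 := by linarith
  have ha979 : (979 / 1000 : ℝ) ≤ a := by nlinarith
  have hπ2 : (9.869 : ℝ) < π ^ 2 := by nlinarith [pi_gt_d6]
  -- the difference factors as `(1 - a) * (π² a² (1 + a) / 9 - 2)`
  have hK : 18 < π ^ 2 * a ^ 2 * (1 + a) := by
    have : (9.869 : ℝ) * (2997 / 3125) < π ^ 2 * a ^ 2 := by nlinarith
    nlinarith
  nlinarith [mul_pos (sub_pos.mpr ha1) (sub_pos.mpr hK)]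

lemma norm_one_sub_lt_pi_div_twelve_mul {u : ℂ} (hu : ‖u‖ = 1) (hre : |u.im| ≤ u.re)
    (h0 : u ^ 4 ≠ 1) (h : ‖1 - u ^ 4‖ ^ 2 ≤ 1024 / 3125) :
    ‖1 - u‖ < π / 12 * ‖1 - u ^ 4‖ := by
  have hab := re_sq_add_im_sq_of_norm_eq_one hu
  have ha1 : u.re < 1 := by
    refine lt_of_le_of_ne (by nlinarith [sq_nonneg u.im]) fun ha => h0 ?_
    have hb : u.im = 0 := by nlinarith
    rw [Complex.ext (z := u) (w := 1) ha hb, one_pow]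
  have ha : 1 / 2 ≤ u.re ^ 2 := by nlinarith [sq_abs u.im, abs_nonneg u.im]
  refine lt_of_pow_lt_pow_left₀ 2 (by positivity) ?_
  rw [mul_pow, sq_norm_one_sub_of_norm_eq_one hu, sq_norm_one_sub_pow_four_of_norm_eq_one hu]
  rw [sq_norm_one_sub_pow_four_of_norm_eq_one hu] at h
  exact two_sub_two_mul_lt_pi_sq_mul ((abs_nonneg _).trans hre) ha ha1 h

lemma norm_sub_lt_pi_div_twelve_mul_of_forall_norm_sub_le {ω w : ℂ} (hω : ω ^ 4 = 1)
    (hw : ‖w‖ = 1) (hmin : ∀ ω' : ℂ, ω' ^ 4 = 1 → ‖ω - w‖ ≤ ‖ω' - w‖) (h0 : w ^ 4 ≠ 1)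
    (h : ‖1 - w ^ 4‖ ^ 2 ≤ 1024 / 3125) :
    ‖ω - w‖ < π / 12 * ‖1 - w ^ 4‖ := by
  have hω1 : ‖ω‖ = 1 := norm_eq_one_of_pow_eq_one hω four_ne_zero
  have hω0 : ω ≠ 0 := norm_ne_zero_iff.mp (by rw [hω1]; exact one_ne_zero)
  set u := w / ω
  have hwu : w = ω * u := (mul_div_cancel₀ w hω0).symm
  have hrot : ∀ ζ, ‖ω * ζ - w‖ = ‖ζ - u‖ := fun ζ => by
    rw [hwu, ← mul_sub, norm_mul, hω1, one_mul]
  have hmin' : ∀ ζ : ℂ, ζ ^ 4 = 1 → ‖1 - u‖ ≤ ‖ζ - u‖ := fun ζ hζ => by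
    rw [← hrot 1, mul_one, ← hrot]
    exact hmin (ω * ζ) (by rw [mul_pow, hω, hζ, one_mul])
  have hu4 : u ^ 4 = w ^ 4 := by rw [hwu, mul_pow, hω, one_mul]
  have hre : |u.im| ≤ u.re := abs_im_le_re_of_norm_one_sub_le
    (hmin' I I_pow_four) (hmin' (-I) (by rw [neg_pow, I_pow_four]; norm_num))
  rw [← mul_one ω, hrot, ← hu4]
  rw [← hu4] at h0 h
  exact norm_one_sub_lt_pi_div_twelve_mul (by rw [norm_div, hw, hω1, div_one]) hre h0 h

section ResolventForms

variable {t : ℕ} {δ ε : ℂ}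

lemma resolvent_pow_four_sub (hδ : δ ^ 4 = 4 * (I * (√t : ℂ) + 1))
    (hε : ε ^ 4 = 4 * (I * (√t : ℂ) - 1)) (x y : ℤ) :
    (δ * (x - I * √t * y)) ^ 4 - (ε * (x + I * √t * y)) ^ 4 = 8 * Pquartic t x y := by
  have hs : ((√t : ℝ) : ℂ) ^ 2 = t := by rw [← ofReal_pow, sq_sqrt t.cast_nonneg, ofReal_natCast]
  rw [mul_pow, mul_pow, hδ, hε, Pquartic]
  push_cast
  rw [← hs]
  ring_nf
  simp only [I_sq, I_pow_four, pow_three]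
  ring_nf

lemma sq_norm_sub_I_mul_sqrt_mul (x y : ℤ) : ‖(x : ℂ) - I * √t * y‖ ^ 2 = x ^ 2 + t * y ^ 2 := by
  rw [sq_norm_sub]
  simp [mul_pow, sq_sqrt t.cast_nonneg]

lemma norm_add_I_mul_sqrt_mul (x y : ℤ) :
    ‖(x : ℂ) + I * √t * y‖ = ‖(x : ℂ) - I * √t * y‖ := by
  rw [← Complex.norm_conj]
  simp [sub_eq_add_neg]

lemma sq_norm_four_mul_I_mul_sqrt_add_one : ‖4 * (I * (√t : ℂ) + 1)‖ ^ 2 = 16 * (1 + t) := by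
  rw [Complex.sq_norm, normSq_apply]
  simp only [mul_re, mul_im, add_re, add_im, I_re, I_im, ofReal_re, ofReal_im, one_re, one_im]
  norm_num
  linear_combination 16 * mul_self_sqrt t.cast_nonneg

lemma resolvent_ne_zero (hδ : δ ^ 4 = 4 * (I * (√t : ℂ) + 1)) {x : ℤ} (hx : x ≠ 0) (y : ℤ) :
    δ * (x - I * √t * y) ≠ 0 := by
  refine mul_ne_zero ?_ ?_
  · rintro rfl
    simpa using congrArg re hδ
  · rw [← norm_ne_zero_iff, ← pow_ne_zero_iff two_ne_zero, sq_norm_sub_I_mul_sqrt_mul]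
    positivity

lemma norm_div_resolvent_eq_one (hδ : δ ^ 4 = 4 * (I * (√t : ℂ) + 1))
    (hε : ε ^ 4 = 4 * (I * (√t : ℂ) - 1)) {x : ℤ} (hx : x ≠ 0) (y : ℤ) :
    ‖ε * (x + I * √t * y) / (δ * (x - I * √t * y))‖ = 1 := by
  have h4 : ‖ε‖ ^ 4 = ‖δ‖ ^ 4 := by
    have hconj : I * (√t : ℂ) - 1 = -(starRingEnd ℂ) (I * √t + 1) := by
      simp only [map_add, map_mul, conj_I, conj_ofReal, map_one]; ring
    rw [← norm_pow, ← norm_pow, hδ, hε, hconj, norm_mul, norm_neg, Complex.norm_conj, norm_mul]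
  rw [norm_div, norm_mul, norm_mul, norm_add_I_mul_sqrt_mul,
    (pow_left_inj₀ (norm_nonneg _) (norm_nonneg _) four_ne_zero).mp h4, ← norm_mul,
    div_self (norm_ne_zero_iff.mpr (resolvent_ne_zero hδ hx y))]

lemma sq_norm_resolvent_pow_four (hδ : δ ^ 4 = 4 * (I * (√t : ℂ) + 1)) (x y : ℤ) :
    ‖(δ * (x - I * √t * y)) ^ 4‖ ^ 2 = 16 * (1 + t) * (x ^ 2 + t * y ^ 2) ^ 4 := by
  rw [mul_pow, hδ, norm_mul, mul_pow, sq_norm_four_mul_I_mul_sqrt_add_one, norm_pow, ← pow_mul,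
    mul_comm 4 2, pow_mul, sq_norm_sub_I_mul_sqrt_mul]

lemma one_sub_div_resolvent_pow_four_mul (hδ : δ ^ 4 = 4 * (I * (√t : ℂ) + 1))
    (hε : ε ^ 4 = 4 * (I * (√t : ℂ) - 1)) {x : ℤ} (hx : x ≠ 0) (y : ℤ) :
    (1 - (ε * (x + I * √t * y) / (δ * (x - I * √t * y))) ^ 4) * (δ * (x - I * √t * y)) ^ 4
      = 8 * Pquartic t x y := by
  have := resolvent_ne_zero hδ hx y
  rw [div_pow, one_sub_div (pow_ne_zero 4 this), div_mul_cancel₀ _ (pow_ne_zero 4 this),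
    resolvent_pow_four_sub hδ hε]

lemma div_resolvent_pow_four_ne_one (hδ : δ ^ 4 = 4 * (I * (√t : ℂ) + 1))
    (hε : ε ^ 4 = 4 * (I * (√t : ℂ) - 1)) {x : ℤ} (hx : x ≠ 0) {y : ℤ}
    (hP : Pquartic t x y ≠ 0) :
    (ε * (x + I * √t * y) / (δ * (x - I * √t * y))) ^ 4 ≠ 1 := by
  intro h
  have := one_sub_div_resolvent_pow_four_mul hδ hε hx y
  rw [h, sub_self, zero_mul, eq_comm, mul_eq_zero] at this
  exact hP (by exact_mod_cast this.resolve_left (by norm_num))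

lemma mul_pow_four_le_mul_one_add_pow_five {t : ℝ} (ht : 0 ≤ t) :
    3125 * t ^ 4 ≤ 256 * (1 + t) ^ 5 := by
  -- the two sides touch at `t = 4`
  nlinarith [mul_nonneg (sq_nonneg (t - 4))
    (show 0 ≤ 256 * t ^ 3 + 203 * t ^ 2 + 88 * t + 16 by positivity)]

lemma sq_norm_one_sub_div_resolvent_pow_four_le (hδ : δ ^ 4 = 4 * (I * (√t : ℂ) + 1))
    (hε : ε ^ 4 = 4 * (I * (√t : ℂ) - 1)) {x y : ℤ} (hx : x ≠ 0) (hy : y ≠ 0)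
    (hP0 : 0 < Pquartic t x y) (hPt : Pquartic t x y ≤ (t : ℤ) ^ 2) :
    ‖1 - (ε * (x + I * √t * y) / (δ * (x - I * √t * y))) ^ 4‖ ^ 2 ≤ 1024 / 3125 := by
  have hnorm := congrArg (‖·‖ ^ 2) (one_sub_div_resolvent_pow_four_mul hδ hε hx y)
  rw [norm_mul, mul_pow, sq_norm_resolvent_pow_four hδ, norm_mul, mul_pow, norm_intCast, sq_abs]
    at hnorm
  set P := Pquartic t x y
  set Q : ℝ := x ^ 2 + t * y ^ 2
  have hP : (P : ℝ) ^ 2 ≤ (t : ℝ) ^ 4 := by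
    have : P ^ 2 ≤ (t : ℤ) ^ 4 := by nlinarith
    exact_mod_cast this
  have hQ : (1 + t : ℝ) ^ 4 ≤ Q ^ 4 := by
    have hx1 : (1 : ℝ) ≤ x ^ 2 := mod_cast (one_le_sq_iff_one_le_abs _).mpr (Int.one_le_abs hx)
    have hy1 : (1 : ℝ) ≤ y ^ 2 := mod_cast (one_le_sq_iff_one_le_abs _).mpr (Int.one_le_abs hy)
    gcongr
    nlinarith
  have key := mul_pow_four_le_mul_one_add_pow_five (t.cast_nonneg (α := ℝ))
  have hD : 0 < 16 * (1 + t) * Q ^ 4 := by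
    have : (0 : ℝ) < (1 + t) ^ 4 := by positivity
    nlinarith
  refine le_of_mul_le_mul_right ?_ hD
  rw [hnorm, Complex.norm_ofNat]
  nlinarith [mul_le_mul_of_nonneg_left hQ (by positivity : (0 : ℝ) ≤ 1 + t)]

end ResolventForms

theorem related_to_unique_fourth_root_general (t : ℕ) (δ ε : ℂ)
    (hδ : δ ^ 4 = 4 * (Complex.I * (Real.sqrt t : ℂ) + 1))
    (hε : ε ^ 4 = 4 * (Complex.I * (Real.sqrt t : ℂ) - 1))
    (x y : ℤ) (hx : x ≠ 0) (hy : y ≠ 0)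
    (hP0 : 0 < Pquartic t x y) (hPt : Pquartic t x y ≤ (t : ℤ) ^ 2)
    (ξ η z : ℂ)
    (hξ : ξ = δ * ((x : ℂ) - Complex.I * (Real.sqrt t : ℂ) * (y : ℂ)))
    (hη : η = ε * ((x : ℂ) + Complex.I * (Real.sqrt t : ℂ) * (y : ℂ)))
    (hz : z = 1 - (η / ξ) ^ 4)
    (ω : ℂ) (hω : ω ∈ ({1, Complex.I, -1, -Complex.I} : Set ℂ))
    (hmin : ∀ ω' ∈ ({1, Complex.I, -1, -Complex.I} : Set ℂ), ‖ω - η / ξ‖ ≤ ‖ω' - η / ξ‖) :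
    ‖ω - η / ξ‖ < Real.pi / 12 * ‖z‖ ∧
    ∃! ω' : ℂ, ω' ∈ ({1, Complex.I, -1, -Complex.I} : Set ℂ) ∧
      ‖ω' - η / ξ‖ < Real.pi / 12 * ‖z‖ := by
  subst hξ hη hz
  set w := ε * (x + I * √t * y) / (δ * (x - I * √t * y))
  have hbound := sq_norm_one_sub_div_resolvent_pow_four_le hδ hε hx hy hP0 hPt
  have hclose := norm_sub_lt_pi_div_twelve_mul_of_forall_norm_sub_le (mem_fourthRoots_iff.mp hω)
    (norm_div_resolvent_eq_one hδ hε hx y) (fun ω' hω' => hmin ω' (mem_fourthRoots_iff.mpr hω'))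
    (div_resolvent_pow_four_ne_one hδ hε hx hP0.ne') hbound
  have hsmall : π / 12 * ‖1 - w ^ 4‖ < 1 / 2 := by nlinarith [pi_lt_four, norm_nonneg (1 - w ^ 4)]
  refine ⟨hclose, ω, ⟨hω, hclose⟩, fun ω' ⟨hω', hclose'⟩ => ?_⟩
  exact eq_of_pow_four_eq_one_of_norm_sub_lt_half (mem_fourthRoots_iff.mp hω)
    (mem_fourthRoots_iff.mp hω') (hclose.trans hsmall) (hclose'.trans hsmall)

/-- Let `t` be a positive integer, and let `ξ, η` be the resolvent forms built from
`δ, ε` with `δ^4 = 4(i√t + 1)`, `ε^4 = 4(i√t - 1)`.  If `x, y` are nonzero integers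
with `0 < P_t(x,y) ≤ t^2`, and `ω ∈ {1, i, -1, -i}` attains the minimum of
`|ω' - η/ξ|` over the fourth roots of unity, then `|ω - η/ξ| < (π/12)|z(x,y)|`;
in particular `(x,y)` is related to exactly one fourth root of unity. -/
theorem related_to_unique_fourth_root (t : ℕ) (ht : 0 < t) (δ ε : ℂ)
    (hδ : δ ^ 4 = 4 * (Complex.I * (Real.sqrt t : ℂ) + 1))
    (hε : ε ^ 4 = 4 * (Complex.I * (Real.sqrt t : ℂ) - 1))
    (x y : ℤ) (hx : x ≠ 0) (hy : y ≠ 0)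
    (hP0 : 0 < Pquartic t x y) (hPt : Pquartic t x y ≤ (t : ℤ) ^ 2)
    (ξ η z : ℂ)
    (hξ : ξ = δ * ((x : ℂ) - Complex.I * (Real.sqrt t : ℂ) * (y : ℂ)))
    (hη : η = ε * ((x : ℂ) + Complex.I * (Real.sqrt t : ℂ) * (y : ℂ)))
    (hz : z = 1 - (η / ξ) ^ 4)
    (ω : ℂ) (hω : ω ∈ ({1, Complex.I, -1, -Complex.I} : Set ℂ))
    (hmin : ∀ ω' ∈ ({1, Complex.I, -1, -Complex.I} : Set ℂ), ‖ω - η / ξ‖ ≤ ‖ω' - η / ξ‖) :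
    ‖ω - η / ξ‖ < Real.pi / 12 * ‖z‖ ∧
    ∃! ω' : ℂ, ω' ∈ ({1, Complex.I, -1, -Complex.I} : Set ℂ) ∧
      ‖ω' - η / ξ‖ < Real.pi / 12 * ‖z‖ :=
  related_to_unique_fourth_root_general t δ ε hδ hε x y hx hy hP0 hPt ξ η z hξ hη hz ω hω hmin
end

section
/- Let t be a positive integer and let (x_1, y_1) and (x_2, y_2) be distinct solutions of the constrained inequality (2.1), both related to the same fourth root of unity ω, and suppose |ξ(x_2,y_2)| ≥ |ξ(x_1,y_1)|. Then |ξ(x_2,y_2)| > (3/π)·t^{−5/4}·|ξ(x_1,y_1)|^3. -/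
/-- The resolvent form `ξ(x,y) = δ (x - i√t y)`. -/
noncomputable def xiForm (t : ℕ) (δ : ℂ) (x y : ℤ) : ℂ :=
  δ * ((x : ℂ) - Complex.I * (Real.sqrt t : ℂ) * (y : ℂ))

/-- The resolvent form `η(x,y) = ε (x + i√t y)`. -/
noncomputable def etaForm (t : ℕ) (ε : ℂ) (x y : ℤ) : ℂ :=
  ε * ((x : ℂ) + Complex.I * (Real.sqrt t : ℂ) * (y : ℂ))

/-- `(x,y)` is related to the fourth root of unity `ω` if
`|ω - η/ξ| < (π/12) |1 - (η/ξ)^4|`. -/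
noncomputable def RelatedTo (t : ℕ) (δ ε : ℂ) (x y : ℤ) (ω : ℂ) : Prop :=
  ‖ω - etaForm t ε x y / xiForm t δ x y‖ <
    Real.pi / 12 * ‖1 - (etaForm t ε x y / xiForm t δ x y) ^ 4‖

/-- A solution of the constrained inequality (2.1): coprime positive integers `x, y`
with `0 < P_t(x,y) ≤ t^2` and `x y > 64 t^3`. -/
def SolTwoOne (t : ℕ) (x y : ℤ) : Prop :=
  0 < x ∧ 0 < y ∧ IsCoprime x y ∧ 0 < Pquartic t x y ∧
    Pquartic t x y ≤ (t : ℤ) ^ 2 ∧ 64 * (t : ℤ) ^ 3 < x * y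

/-!
The cross term `ξ₁ η₂ - ξ₂ η₁` equals `2 i √t δ ε (x₁ y₂ - x₂ y₁)`, so for distinct coprime
solutions it has norm at least `2 √t |δ ε| ≥ 4 t^(3/4)`. On the other hand it equals
`ξ₁ ξ₂ ((ω - η₁/ξ₁) - (ω - η₂/ξ₂))`, and since `|1 - (η/ξ)^4| |ξ|^4 = 8 |P_t| ≤ 8 t²`, being related
to `ω` forces `|ω - η/ξ| < (2π/3) t² / |ξ|^4 ≤ (2π/3) t² / |ξ₁|^4`. Comparing the two bounds
gives `4 t^(3/4) |ξ₁|^3 < (4π/3) t² |ξ₂|`.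
-/

open Complex Real

lemma norm_mul_sub_mul_le {K : Type*} [NormedField K] {ξ₁ ξ₂ : K} (η₁ η₂ ω : K)
    (h₁ : ξ₁ ≠ 0) (h₂ : ξ₂ ≠ 0) :
    ‖ξ₁ * η₂ - ξ₂ * η₁‖ ≤ ‖ξ₁‖ * ‖ξ₂‖ * (‖ω - η₁ / ξ₁‖ + ‖ω - η₂ / ξ₂‖) := by
  have h : ξ₁ * η₂ - ξ₂ * η₁ = ξ₁ * ξ₂ * ((ω - η₁ / ξ₁) - (ω - η₂ / ξ₂)) := by
    field_simp
    ring
  rw [h, norm_mul, norm_mul]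
  gcongr
  exact norm_sub_le _ _

lemma mul_sub_mul_ne_zero_of_isCoprime {x₁ y₁ x₂ y₂ : ℤ} (hx₁ : 0 < x₁) (hx₂ : 0 < x₂)
    (h₁ : IsCoprime x₁ y₁) (h₂ : IsCoprime x₂ y₂) (hne : (x₁, y₁) ≠ (x₂, y₂)) :
    x₁ * y₂ - x₂ * y₁ ≠ 0 := by
  intro h
  have hxy : x₁ * y₂ = x₂ * y₁ := sub_eq_zero.mp h
  have hx : x₁ = x₂ := Int.dvd_antisymm hx₁.le hx₂.le
    (h₁.dvd_of_dvd_mul_right ⟨y₂, hxy.symm⟩) (h₂.dvd_of_dvd_mul_right ⟨y₁, hxy⟩)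
  subst hx
  exact hne (by rw [mul_left_cancel₀ hx₁.ne' hxy])

lemma four_mul_rpow_le_two_mul_sqrt_mul {t a b : ℝ} (ht : 0 ≤ t) (ha : 0 ≤ a) (hb : 0 ≤ b)
    (ha4 : 4 * √t ≤ a ^ 4) (hb4 : 4 * √t ≤ b ^ 4) :
    4 * t ^ ((3 : ℝ) / 4) ≤ 2 * √t * a * b := by
  have hc4 : (t ^ ((3 : ℝ) / 4)) ^ 4 = t ^ 3 := by
    rw [← Real.rpow_natCast, ← Real.rpow_mul ht]
    norm_num
  have hs2 : √t ^ 2 = t := Real.sq_sqrt ht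
  refine (pow_le_pow_iff_left₀ (by positivity) (by positivity) four_ne_zero).mp ?_
  calc (4 * t ^ ((3 : ℝ) / 4)) ^ 4 = 16 * t ^ 2 * (4 * √t * (4 * √t)) := by
        rw [mul_pow, hc4]
        linear_combination (-256 * t ^ 2) * hs2
    _ ≤ 16 * t ^ 2 * (a ^ 4 * b ^ 4) := by gcongr
    _ = (2 * √t * a * b) ^ 4 := by linear_combination (-16 * a ^ 4 * b ^ 4 * (√t ^ 2 + t)) * hs2

lemma mul_pow_three_lt_of_le_mul_mul_add {A B u₁ u₂ c K : ℝ} (hA : 0 < A) (hAB : A ≤ B)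
    (hu₂ : 0 ≤ u₂) (h₁ : u₁ * A ^ 4 < K) (h₂ : u₂ * B ^ 4 < K)
    (hc : c ≤ A * B * (u₁ + u₂)) :
    c * A ^ 3 < 2 * K * B := by
  have h₂' : u₂ * A ^ 4 < K := lt_of_le_of_lt (by gcongr) h₂
  have : c * A ^ 3 * A < 2 * K * B * A :=
    calc c * A ^ 3 * A = c * A ^ 4 := by ring
      _ ≤ A * B * (u₁ + u₂) * A ^ 4 := by gcongr
      _ = A * B * ((u₁ + u₂) * A ^ 4) := by ring
      _ < A * B * (2 * K) := mul_lt_mul_of_pos_left (by linarith) (mul_pos hA (hA.trans_le hAB))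
      _ = 2 * K * B * A := by ring
  exact lt_of_mul_lt_mul_right this hA.le

lemma three_div_pi_mul_rpow_mul_lt {t A B : ℝ} (ht : 0 < t)
    (h : 4 * t ^ ((3 : ℝ) / 4) * A ^ 3 < 2 * (2 * π / 3 * t ^ 2) * B) :
    3 / π * t ^ (-(5 : ℝ) / 4) * A ^ 3 < B := by
  have hrpow : t ^ (-(5 : ℝ) / 4) = t ^ ((3 : ℝ) / 4) / t ^ 2 := by
    rw [eq_div_iff (by positivity), ← Real.rpow_natCast, ← Real.rpow_add ht]
    norm_num
  calc 3 / π * t ^ (-(5 : ℝ) / 4) * A ^ 3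
      = 3 / (4 * π * t ^ 2) * (4 * t ^ ((3 : ℝ) / 4) * A ^ 3) := by
        rw [hrpow]
        field_simp
    _ < 3 / (4 * π * t ^ 2) * (2 * (2 * π / 3 * t ^ 2) * B) := by gcongr
    _ = B := by
        field_simp
        ring

section ResolventForms

variable {t : ℕ} {δ ε : ℂ}

lemma xiForm_ne_zero (hδ : δ ≠ 0) {x : ℤ} (hx : x ≠ 0) (y : ℤ) : xiForm t δ x y ≠ 0 := by
  refine mul_ne_zero hδ fun h => hx ?_
  simpa [Complex.mul_re] using congrArg Complex.re h

lemma xiForm_pow_four_sub_etaForm_pow_four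
    (hδ : δ ^ 4 = 4 * (I * (√t : ℂ) + 1)) (hε : ε ^ 4 = 4 * (I * (√t : ℂ) - 1)) (x y : ℤ) :
    xiForm t δ x y ^ 4 - etaForm t ε x y ^ 4 = 8 * (Pquartic t x y : ℂ) := by
  have ht : ((t : ℕ) : ℂ) = -(I * (√t : ℂ)) ^ 2 := by
    rw [mul_pow, I_sq, ← ofReal_pow, Real.sq_sqrt t.cast_nonneg]
    push_cast
    ring
  unfold xiForm etaForm Pquartic
  push_cast
  rw [ht]
  linear_combination ((x : ℂ) - I * √t * y) ^ 4 * hδ - ((x : ℂ) + I * √t * y) ^ 4 * hε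

lemma xiForm_mul_etaForm_sub_mul (x₁ y₁ x₂ y₂ : ℤ) :
    xiForm t δ x₁ y₁ * etaForm t ε x₂ y₂ - xiForm t δ x₂ y₂ * etaForm t ε x₁ y₁ =
      2 * I * (√t : ℂ) * δ * ε * ((x₁ * y₂ - x₂ * y₁ : ℤ) : ℂ) := by
  unfold xiForm etaForm
  push_cast
  ring

variable (hδ : δ ^ 4 = 4 * (I * (√t : ℂ) + 1)) (hε : ε ^ 4 = 4 * (I * (√t : ℂ) - 1))
include hδ hε

lemma norm_one_sub_div_pow_four_mul_norm_pow_four {x y : ℤ} (hξ : xiForm t δ x y ≠ 0) :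
    ‖1 - (etaForm t ε x y / xiForm t δ x y) ^ 4‖ * ‖xiForm t δ x y‖ ^ 4 =
      8 * |(Pquartic t x y : ℝ)| := by
  have h : 1 - (etaForm t ε x y / xiForm t δ x y) ^ 4 =
      8 * (Pquartic t x y : ℂ) / xiForm t δ x y ^ 4 := by
    rw [← xiForm_pow_four_sub_etaForm_pow_four hδ hε x y]
    field_simp
  rw [h, norm_div, norm_pow, div_mul_cancel₀ _ (by positivity), norm_mul, norm_intCast,
    Complex.norm_ofNat]

lemma RelatedTo.norm_sub_mul_norm_pow_four_lt {x y : ℤ} {ω : ℂ} (hrel : RelatedTo t δ ε x y ω)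
    (hξ : xiForm t δ x y ≠ 0) (hP : |Pquartic t x y| ≤ (t : ℤ) ^ 2) :
    ‖ω - etaForm t ε x y / xiForm t δ x y‖ * ‖xiForm t δ x y‖ ^ 4 < 2 * π / 3 * t ^ 2 := by
  have hP' : |(Pquartic t x y : ℝ)| ≤ (t : ℝ) ^ 2 := by exact_mod_cast hP
  calc ‖ω - etaForm t ε x y / xiForm t δ x y‖ * ‖xiForm t δ x y‖ ^ 4
      < π / 12 * ‖1 - (etaForm t ε x y / xiForm t δ x y) ^ 4‖ * ‖xiForm t δ x y‖ ^ 4 := by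
        gcongr
        exact hrel
    _ = π / 12 * (8 * |(Pquartic t x y : ℝ)|) := by
        rw [mul_assoc, norm_one_sub_div_pow_four_mul_norm_pow_four hδ hε hξ]
    _ ≤ 2 * π / 3 * t ^ 2 := by nlinarith [pi_pos]

lemma four_mul_rpow_le_norm_xiForm_mul_etaForm_sub_mul {x₁ y₁ x₂ y₂ : ℤ}
    (hdet : x₁ * y₂ - x₂ * y₁ ≠ 0) :
    4 * (t : ℝ) ^ ((3 : ℝ) / 4) ≤
      ‖xiForm t δ x₁ y₁ * etaForm t ε x₂ y₂ - xiForm t δ x₂ y₂ * etaForm t ε x₁ y₁‖ := by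
  have hsqrt_le (ζ : ℂ) (h : (ζ ^ 4).im = 4 * √t) : 4 * √t ≤ ‖ζ‖ ^ 4 :=
    h ▸ norm_pow ζ 4 ▸ (le_abs_self _).trans (abs_im_le_norm _)
  have hdet' : (1 : ℝ) ≤ |((x₁ * y₂ - x₂ * y₁ : ℤ) : ℝ)| := by
    exact_mod_cast Int.one_le_abs hdet
  calc 4 * (t : ℝ) ^ ((3 : ℝ) / 4) ≤ 2 * √t * ‖δ‖ * ‖ε‖ :=
        four_mul_rpow_le_two_mul_sqrt_mul t.cast_nonneg (norm_nonneg _) (norm_nonneg _)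
          (hsqrt_le δ (by simp [hδ])) (hsqrt_le ε (by simp [hε]))
    _ ≤ 2 * √t * ‖δ‖ * ‖ε‖ * |((x₁ * y₂ - x₂ * y₁ : ℤ) : ℝ)| :=
        le_mul_of_one_le_right (by positivity) hdet'
    _ = _ := by
        rw [xiForm_mul_etaForm_sub_mul]
        simp only [norm_mul, norm_I, Complex.norm_ofNat, norm_real, norm_intCast, Real.norm_eq_abs,
          abs_of_nonneg (Real.sqrt_nonneg _), mul_one]

end ResolventForms

theorem gap_principle_general (t : ℕ) (ht : 0 < t) (δ ε : ℂ)
    (hδ : δ ^ 4 = 4 * (Complex.I * (Real.sqrt t : ℂ) + 1))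
    (hε : ε ^ 4 = 4 * (Complex.I * (Real.sqrt t : ℂ) - 1))
    (x₁ y₁ x₂ y₂ : ℤ)
    (h₁ : SolTwoOne t x₁ y₁) (h₂ : SolTwoOne t x₂ y₂)
    (hne : (x₁, y₁) ≠ (x₂, y₂))
    (ω : ℂ)
    (hrel₁ : RelatedTo t δ ε x₁ y₁ ω) (hrel₂ : RelatedTo t δ ε x₂ y₂ ω)
    (hle : ‖xiForm t δ x₁ y₁‖ ≤ ‖xiForm t δ x₂ y₂‖) :
    3 / Real.pi * (t : ℝ) ^ (-(5 : ℝ) / 4) * ‖xiForm t δ x₁ y₁‖ ^ 3 <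
      ‖xiForm t δ x₂ y₂‖ := by
  obtain ⟨hx₁, -, hcop₁, hP₁, hP₁t, -⟩ := h₁
  obtain ⟨hx₂, -, hcop₂, hP₂, hP₂t, -⟩ := h₂
  have hδ0 : δ ≠ 0 := by
    rintro rfl
    simpa using congrArg re hδ
  have hξ₁ := xiForm_ne_zero (t := t) hδ0 hx₁.ne' y₁
  have hξ₂ := xiForm_ne_zero (t := t) hδ0 hx₂.ne' y₂
  have hgap := mul_pow_three_lt_of_le_mul_mul_add (norm_pos_iff.mpr hξ₁) hle (norm_nonneg _)
    (hrel₁.norm_sub_mul_norm_pow_four_lt hδ hε hξ₁ ((abs_of_pos hP₁).trans_le hP₁t))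
    (hrel₂.norm_sub_mul_norm_pow_four_lt hδ hε hξ₂ ((abs_of_pos hP₂).trans_le hP₂t))
    ((four_mul_rpow_le_norm_xiForm_mul_etaForm_sub_mul hδ hε
      (mul_sub_mul_ne_zero_of_isCoprime hx₁ hx₂ hcop₁ hcop₂ hne)).trans
      (norm_mul_sub_mul_le _ _ ω hξ₁ hξ₂))
  exact three_div_pi_mul_rpow_mul_lt (by exact_mod_cast ht) hgap

/-- Gap principle: two distinct solutions of (2.1) related to the same fourth root of
unity with `|ξ₂| ≥ |ξ₁|` satisfy `|ξ₂| > (3/π) t^(-5/4) |ξ₁|^3`. -/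
theorem gap_principle (t : ℕ) (ht : 0 < t) (δ ε : ℂ)
    (hδ : δ ^ 4 = 4 * (Complex.I * (Real.sqrt t : ℂ) + 1))
    (hε : ε ^ 4 = 4 * (Complex.I * (Real.sqrt t : ℂ) - 1))
    (x₁ y₁ x₂ y₂ : ℤ)
    (h₁ : SolTwoOne t x₁ y₁) (h₂ : SolTwoOne t x₂ y₂)
    (hne : (x₁, y₁) ≠ (x₂, y₂))
    (ω : ℂ) (hω : ω ∈ ({1, Complex.I, -1, -Complex.I} : Set ℂ))
    (hrel₁ : RelatedTo t δ ε x₁ y₁ ω) (hrel₂ : RelatedTo t δ ε x₂ y₂ ω)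
    (hle : ‖xiForm t δ x₁ y₁‖ ≤ ‖xiForm t δ x₂ y₂‖) :
    3 / Real.pi * (t : ℝ) ^ (-(5 : ℝ) / 4) * ‖xiForm t δ x₁ y₁‖ ^ 3 <
      ‖xiForm t δ x₂ y₂‖ :=
  gap_principle_general t ht δ ε hδ hε x₁ y₁ x₂ y₂ h₁ h₂ hne ω hrel₁ hrel₂ hle
end

section
/- For every positive integer r, every g ∈ {0,1}, and every complex number z with |1 − z| ≤ 1, one has |A_{r,g}(z)| ≤ C(2r−g, r), where C(2r−g, r) is the ordinary binomial coefficient. -/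
/-- The generalized binomial coefficient `C(α, m) = α(α-1)⋯(α-m+1)/m!`. -/
noncomputable def genChoose (α : ℝ) (m : ℕ) : ℝ :=
  (∏ i ∈ Finset.range m, (α - i)) / m.factorial

/-- The polynomial `A_{r,g}(z) = Σ_{m=0}^{r} C(r-g+1/4, m) C(2r-g-m, r-g) (-z)^m`. -/
noncomputable def Apoly (r g : ℕ) (z : ℂ) : ℂ :=
  ∑ m ∈ Finset.range (r + 1),
    ((genChoose ((r : ℝ) - g + 1/4) m *
      genChoose (2 * (r : ℝ) - g - m) (r - g) : ℝ) : ℂ) * (-z) ^ m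

/-- The polynomial `B_{r,g}(z) = Σ_{m=0}^{r-g} C(r-1/4, m) C(2r-g-m, r) (-z)^m`. -/
noncomputable def Bpoly (r g : ℕ) (z : ℂ) : ℂ :=
  ∑ m ∈ Finset.range (r - g + 1),
    ((genChoose ((r : ℝ) - 1/4) m *
      genChoose (2 * (r : ℝ) - g - m) r : ℝ) : ℂ) * (-z) ^ m

/-! Expanded around `z = 1`, `A_{r,g}(z) = Σ_k C(r-g+1/4, k) C(r-1/4, r-k) (1-z)^k`; this comes from
the Chu–Vandermonde variant `Σ_k C(a,k) C(b,n-k) C(k,j) = C(a,j) C(a-j+b, n-j)`. The new coefficients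
are nonnegative and, by Vandermonde, sum to `C(2r-g, r)`, so the triangle inequality on the disc
`|1 - z| ≤ 1` gives the bound. -/

open Finset Polynomial

namespace Ring

variable {K : Type*} [Field K] [CharZero K]

theorem choose_eq_descPochhammer_eval_div (a : K) (n : ℕ) :
    choose a n = (descPochhammer K n).eval a / n.factorial := by
  rw [choose_eq_smul, ← aeval_eq_smeval, aeval_def, ← eval_map, descPochhammer_map, smul_eq_mul,
    inv_mul_eq_div]

theorem choose_nonneg [LinearOrder K] [IsStrictOrderedRing K] {a : K} {n : ℕ}
    (h : (n : K) - 1 ≤ a) : 0 ≤ choose a n := by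
  rw [choose_eq_descPochhammer_eval_div]
  exact div_nonneg (descPochhammer_nonneg h) (Nat.cast_nonneg _)

end Ring

theorem genChoose_eq_ringChoose (α : ℝ) (m : ℕ) : genChoose α m = Ring.choose α m := by
  rw [Ring.choose_eq_descPochhammer_eval_div, descPochhammer_eval_eq_prod_range, genChoose]

theorem Ring.sum_choose_mul_choose_mul_choose {R : Type*} [CommRing R] [BinomialRing R]
    (a b : R) {n j : ℕ} (hj : j ≤ n) :
    ∑ k ∈ range (n + 1), choose a k * choose b (n - k) * k.choose j =
      choose a j * choose (a - j + b) (n - j) := by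
  rw [add_choose_eq _ (Commute.all _ _), Nat.sum_antidiagonal_eq_sum_range_succ_mk, mul_sum,
    show n + 1 = j + (n - j + 1) by omega, sum_range_add, sum_eq_zero, zero_add]
  · refine sum_congr rfl fun i _ => ?_
    have hsplit := choose_smul_choose a (Nat.le_add_right j i)
    rw [nsmul_eq_mul, Nat.add_sub_cancel_left] at hsplit
    dsimp only
    rw [mul_right_comm, mul_comm (choose a _), hsplit, Nat.sub_sub]
    ring
  · intro k hk
    rw [Nat.choose_eq_zero_of_lt (mem_range.1 hk), Nat.cast_zero, mul_zero]

theorem sum_mul_add_one_pow {R : Type*} [CommSemiring R] (c : ℕ → R) (w : R) (n : ℕ) :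
    ∑ k ∈ range (n + 1), c k * (w + 1) ^ k =
      ∑ j ∈ range (n + 1), (∑ k ∈ range (n + 1), c k * k.choose j) * w ^ j := by
  simp_rw [sum_mul, add_pow, mul_sum]
  rw [sum_comm]
  refine sum_congr rfl fun k hk => ?_
  rw [← sum_subset (range_subset_range.2 (Nat.succ_le_succ (mem_range_succ_iff.1 hk)))]
  · refine sum_congr rfl fun j _ => by rw [one_pow, mul_one]; ring
  · intro j _ hj
    rw [Nat.choose_eq_zero_of_lt (by simpa using hj), Nat.cast_zero, mul_zero, zero_mul]

theorem norm_sum_smul_pow_le {A : Type*} [NormedRing A] [NormOneClass A] [NormedAlgebra ℝ A]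
    {ι : Type*} (s : Finset ι) {c : ι → ℝ} (hc : ∀ k ∈ s, 0 ≤ c k) (e : ι → ℕ) {w : A}
    (hw : ‖w‖ ≤ 1) : ‖∑ k ∈ s, c k • w ^ e k‖ ≤ ∑ k ∈ s, c k := by
  refine (norm_sum_le _ _).trans (sum_le_sum fun k hk => ?_)
  rw [norm_smul, Real.norm_of_nonneg (hc k hk)]
  exact mul_le_of_le_one_right (hc k hk) ((norm_pow_le _ _).trans (pow_le_one₀ (norm_nonneg _) hw))

noncomputable def Acoeff (r g k : ℕ) : ℝ :=
  Ring.choose ((r : ℝ) - g + 1/4) k * Ring.choose ((r : ℝ) - 1/4) (r - k)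

theorem Acoeff_nonneg {r g k : ℕ} (hg : g ≤ 1) (hk : k ≤ r) : 0 ≤ Acoeff r g k := by
  have hg' : (g : ℝ) ≤ 1 := by exact_mod_cast hg
  have hk' : (k : ℝ) ≤ r := by exact_mod_cast hk
  have hrk : ((r - k : ℕ) : ℝ) ≤ r := by exact_mod_cast Nat.sub_le r k
  exact mul_nonneg (Ring.choose_nonneg (by linarith)) (Ring.choose_nonneg (by linarith))

theorem sum_Acoeff {r g : ℕ} (hg : g ≤ 2 * r) :
    ∑ k ∈ range (r + 1), Acoeff r g k = (2 * r - g).choose r := by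
  have h : ((r : ℝ) - g + 1/4) + (r - 1/4) = ((2 * r - g : ℕ) : ℝ) := by
    push_cast [Nat.cast_sub hg]; ring
  rw [← Ring.choose_natCast, ← h, Ring.add_choose_eq _ (Commute.all _ _),
    Nat.sum_antidiagonal_eq_sum_range_succ_mk]
  rfl

theorem sum_Acoeff_mul_choose {r g j : ℕ} (hg : g ≤ r) (hj : j ≤ r) :
    ∑ k ∈ range (r + 1), Acoeff r g k * k.choose j =
      genChoose ((r : ℝ) - g + 1/4) j * genChoose (2 * (r : ℝ) - g - j) (r - g) := by
  have hcast : ((2 * r - g - j : ℕ) : ℝ) = 2 * (r : ℝ) - g - j := by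
    push_cast [Nat.cast_sub (show g + j ≤ 2 * r by omega), Nat.sub_sub]; ring
  have hsum : (r : ℝ) - g + 1/4 - j + (r - 1/4) = ((2 * r - g - j : ℕ) : ℝ) := by
    rw [hcast]; ring
  simp only [Acoeff, genChoose_eq_ringChoose]
  rw [Ring.sum_choose_mul_choose_mul_choose _ _ hj, hsum, ← hcast, Ring.choose_natCast,
    Ring.choose_natCast, Nat.choose_symm_of_eq_add (a := r - j) (b := r - g) (by omega)]

theorem Apoly_eq_sum_Acoeff_mul_one_sub_pow {r g : ℕ} (hg : g ≤ r) (z : ℂ) :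
    Apoly r g z = ∑ k ∈ range (r + 1), (Acoeff r g k : ℂ) * (1 - z) ^ k := by
  rw [sub_eq_neg_add, sum_mul_add_one_pow, Apoly]
  refine sum_congr rfl fun j hj => ?_
  rw [← sum_Acoeff_mul_choose hg (mem_range_succ_iff.1 hj)]
  push_cast
  rfl

/-- For `|1 - z| ≤ 1`, one has `|A_{r,g}(z)| ≤ C(2r-g, r)` (ordinary binomial). -/
theorem Apoly_bound (r : ℕ) (hr : 0 < r) (g : ℕ) (hg : g = 0 ∨ g = 1)
    (z : ℂ) (hz : ‖1 - z‖ ≤ 1) :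
    ‖Apoly r g z‖ ≤ (Nat.choose (2 * r - g) r : ℝ) := by
  rw [Apoly_eq_sum_Acoeff_mul_one_sub_pow (by omega) z, ← sum_Acoeff (by omega)]
  simp_rw [← Complex.real_smul]
  exact norm_sum_smul_pow_le _ (fun k hk => Acoeff_nonneg (by omega) (mem_range_succ_iff.1 hk)) _ hz
end

section
/- For every positive integer r, every h ∈ {0,1}, and every complex number z ≠ 0, one has A_{r,0}(z)·B_{r+h,1}(z) − A_{r+h,1}(z)·B_{r,0}(z) ≠ 0. -/
open Finset

theorem genChoose_zero_right (α : ℝ) : genChoose α 0 = 1 := by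
  simp [genChoose]

theorem genChoose_succ_right_eq (α : ℝ) (m : ℕ) :
    ((m : ℝ) + 1) * genChoose α (m + 1) = (α - m) * genChoose α m := by
  simp only [genChoose, prod_range_succ, Nat.factorial_succ]
  push_cast
  field_simp

theorem genChoose_succ_succ_mul (α : ℝ) (m : ℕ) :
    ((m : ℝ) + 1) * genChoose (α + 1) (m + 1) = (α + 1) * genChoose α m := by
  simp only [genChoose, prod_range_succ', Nat.factorial_succ]
  push_cast
  simp only [add_sub_add_right_eq_sub, sub_zero]
  field_simp

theorem genChoose_succ_succ (α : ℝ) (m : ℕ) :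
    genChoose (α + 1) (m + 1) = genChoose α m + genChoose α (m + 1) := by
  have hm : (m : ℝ) + 1 ≠ 0 := by positivity
  apply mul_left_cancel₀ hm
  linear_combination genChoose_succ_succ_mul α m - genChoose_succ_right_eq α m

theorem genChoose_natCast_of_lt {n k : ℕ} (h : n < k) : genChoose n k = 0 := by
  rw [genChoose, prod_eq_zero (mem_range.mpr h) (sub_self _), zero_div]

noncomputable def aCoeff (r g m : ℕ) : ℝ :=
  genChoose ((r : ℝ) - g + 1/4) m * genChoose (2 * (r : ℝ) - g - m) (r - g)

noncomputable def bCoeff (r g m : ℕ) : ℝ :=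
  genChoose ((r : ℝ) - 1/4) m * genChoose (2 * (r : ℝ) - g - m) r

-- `ring_nf` also normalizes the arguments of `genChoose`, which makes e.g.
-- `genChoose (2 * (n + 2) - 1 - (k + 1)) (n + 1)` and `genChoose (2 * n + 1 - k + 1) (n + 1)`
-- the same atom.
theorem aCoeff_succ_one_zero (n : ℕ) :
    4 * ((n : ℝ) + 2) * aCoeff (n + 2) 1 0 = 4 * (2 * n + 3) * aCoeff (n + 1) 0 0 := by
  simp only [aCoeff, genChoose_zero_right]
  push_cast
  linear_combination (norm := ring_nf)
    4 * (n + 2) * genChoose_succ_succ (2 * n + 2) n - 4 * genChoose_succ_right_eq (2 * n + 2) n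

theorem aCoeff_succ_one_succ (n k : ℕ) :
    4 * ((n : ℝ) + 2) * aCoeff (n + 2) 1 (k + 1)
      = 4 * (2 * n + 3) * aCoeff (n + 1) 0 (k + 1) + (4 * n + 5) * aCoeff (n + 1) 1 k := by
  simp only [aCoeff, Nat.add_sub_cancel, Nat.sub_zero]
  push_cast
  linear_combination (norm := ring_nf)
    4 * (n + 2) * genChoose ((n : ℝ) + 5/4) (k + 1) * genChoose_succ_succ (2 * n + 1 - k) n
    - 4 * genChoose ((n : ℝ) + 5/4) (k + 1) * genChoose_succ_right_eq (2 * n + 1 - k) n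
    + 4 * genChoose (2 * (n : ℝ) + 1 - k) n * genChoose_succ_succ_mul ((n : ℝ) + 1/4) k

theorem aCoeff_zero_eq_zero_above_degree (n : ℕ) : aCoeff (n + 1) 0 (n + 2) = 0 := by
  rw [aCoeff,
    show 2 * ((n + 1 : ℕ) : ℝ) - (0 : ℕ) - (n + 2 : ℕ) = (n : ℕ) by push_cast; ring,
    genChoose_natCast_of_lt (by omega), mul_zero]

theorem bCoeff_succ_one_zero (n : ℕ) :
    4 * ((n : ℝ) + 2) * bCoeff (n + 2) 1 0 = 4 * (2 * n + 3) * bCoeff (n + 1) 0 0 := by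
  simp only [bCoeff, genChoose_zero_right]
  push_cast
  linear_combination (norm := (push_cast; ring_nf)) 4 * genChoose_succ_succ_mul (2 * n + 2) (n + 1)

theorem bCoeff_succ_one_succ (n k : ℕ) :
    4 * ((n : ℝ) + 2) * bCoeff (n + 2) 1 (k + 1)
      = 4 * (2 * n + 3) * bCoeff (n + 1) 0 (k + 1) + (4 * n + 5) * bCoeff (n + 1) 1 k := by
  simp only [bCoeff]
  push_cast
  linear_combination (norm := (push_cast; ring_nf))
    4 * genChoose ((n : ℝ) + 7/4) (k + 1) * genChoose_succ_succ_mul (2 * n + 1 - k) (n + 1)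
    + 4 * (2 * n + 2 - k) * genChoose (2 * (n : ℝ) + 1 - k) (n + 1)
      * genChoose_succ_succ ((n : ℝ) + 3/4) k
    - 4 * genChoose (2 * (n : ℝ) + 1 - k) (n + 1) * genChoose_succ_right_eq ((n : ℝ) + 3/4) k

theorem aCoeff_succ_zero_zero (n : ℕ) :
    4 * ((n : ℝ) + 1) * aCoeff (n + 1) 0 0 = 8 * (n + 1) * aCoeff (n + 1) 1 0 := by
  simp only [aCoeff, genChoose_zero_right, Nat.add_sub_cancel, Nat.sub_zero]
  push_cast
  linear_combination (norm := ring_nf) 4 * genChoose_succ_succ_mul (2 * n + 1) n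

theorem aCoeff_succ_zero_succ (n k : ℕ) :
    4 * ((n : ℝ) + 1) * aCoeff (n + 1) 0 (k + 1)
      = 8 * (n + 1) * aCoeff (n + 1) 1 (k + 1) + (4 * n + 3) * aCoeff n 0 k := by
  simp only [aCoeff, Nat.add_sub_cancel, Nat.sub_zero]
  push_cast
  linear_combination (norm := ring_nf)
    4 * (n + 1) * genChoose (2 * (n : ℝ) + 1 - k) (n + 1)
      * genChoose_succ_succ ((n : ℝ) + 1/4) k
    + 4 * (genChoose ((n : ℝ) + 1/4) k + genChoose ((n : ℝ) + 1/4) (k + 1))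
      * genChoose_succ_succ_mul (2 * n - k) n
    - 4 * genChoose (2 * (n : ℝ) - k) n * genChoose_succ_right_eq ((n : ℝ) + 1/4) k

theorem bCoeff_succ_zero_zero (n : ℕ) :
    4 * ((n : ℝ) + 1) * bCoeff (n + 1) 0 0 = 8 * (n + 1) * bCoeff (n + 1) 1 0 := by
  simp only [bCoeff, genChoose_zero_right]
  push_cast
  linear_combination (norm := ring_nf)
    4 * (n + 1) * genChoose_succ_succ (2 * n + 1) n - 4 * genChoose_succ_right_eq (2 * n + 1) n

theorem bCoeff_succ_zero_succ (n k : ℕ) :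
    4 * ((n : ℝ) + 1) * bCoeff (n + 1) 0 (k + 1)
      = 8 * (n + 1) * bCoeff (n + 1) 1 (k + 1) + (4 * n + 3) * bCoeff n 0 k := by
  simp only [bCoeff]
  push_cast
  linear_combination (norm := (push_cast; ring_nf))
    4 * (n + 1) * genChoose ((n : ℝ) + 3/4) (k + 1) * genChoose_succ_succ (2 * n - k) n
    - 4 * genChoose ((n : ℝ) + 3/4) (k + 1) * genChoose_succ_right_eq (2 * n - k) n
    + 4 * genChoose (2 * (n : ℝ) - k) n * genChoose_succ_succ_mul ((n : ℝ) - 1/4) k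

theorem bCoeff_one_eq_zero_above_degree (n : ℕ) : bCoeff (n + 1) 1 (n + 1) = 0 := by
  rw [bCoeff,
    show 2 * ((n + 1 : ℕ) : ℝ) - (1 : ℕ) - (n + 1 : ℕ) = (n : ℕ) by push_cast; ring,
    genChoose_natCast_of_lt (by omega), mul_zero]

theorem mul_sum_range_succ_eq_of_recurrence {R : Type*} [CommRing R] {n : ℕ} {c d e : ℕ → R}
    {a b g : R} (x : R) (h₀ : a * c 0 = b * d 0)
    (hsucc : ∀ k < n, a * c (k + 1) = b * d (k + 1) + g * e k) :
    a * ∑ m ∈ range (n + 1), c m * x ^ m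
      = b * ∑ m ∈ range (n + 1), d m * x ^ m + g * x * ∑ m ∈ range n, e m * x ^ m := by
  have hterm : ∀ k ∈ range n, a * (c (k + 1) * x ^ (k + 1))
      = b * (d (k + 1) * x ^ (k + 1)) + g * x * (e k * x ^ k) := fun k hk => by
    linear_combination x ^ (k + 1) * hsucc k (mem_range.1 hk)
  rw [mul_sum, mul_sum, mul_sum, sum_range_succ', sum_range_succ', sum_congr rfl hterm,
    sum_add_distrib]
  linear_combination h₀

theorem Apoly_eq_sum (r g : ℕ) (z : ℂ) :
    Apoly r g z = ∑ m ∈ range (r + 1), (aCoeff r g m : ℂ) * (-z) ^ m := rfl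

theorem Bpoly_eq_sum (r g : ℕ) (z : ℂ) :
    Bpoly r g z = ∑ m ∈ range (r - g + 1), (bCoeff r g m : ℂ) * (-z) ^ m := rfl

theorem Apoly_succ_one (n : ℕ) (z : ℂ) :
    4 * ((n : ℂ) + 2) * Apoly (n + 2) 1 z
      = 4 * (2 * n + 3) * Apoly (n + 1) 0 z + (4 * n + 5) * (-z) * Apoly (n + 1) 1 z := by
  have hext : Apoly (n + 1) 0 z
      = ∑ m ∈ range (n + 3), (aCoeff (n + 1) 0 m : ℂ) * (-z) ^ m := by
    rw [sum_range_succ, aCoeff_zero_eq_zero_above_degree, Complex.ofReal_zero, zero_mul,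
      add_zero]
    rfl
  rw [Apoly_eq_sum, hext, Apoly_eq_sum]
  exact mul_sum_range_succ_eq_of_recurrence _ (by exact_mod_cast aCoeff_succ_one_zero n)
    fun k _ => by exact_mod_cast aCoeff_succ_one_succ n k

theorem Bpoly_succ_one (n : ℕ) (z : ℂ) :
    4 * ((n : ℂ) + 2) * Bpoly (n + 2) 1 z
      = 4 * (2 * n + 3) * Bpoly (n + 1) 0 z + (4 * n + 5) * (-z) * Bpoly (n + 1) 1 z := by
  rw [Bpoly_eq_sum, Bpoly_eq_sum, Bpoly_eq_sum]
  exact mul_sum_range_succ_eq_of_recurrence _ (by exact_mod_cast bCoeff_succ_one_zero n)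
    fun k _ => by exact_mod_cast bCoeff_succ_one_succ n k

theorem Apoly_succ_zero (n : ℕ) (z : ℂ) :
    4 * ((n : ℂ) + 1) * Apoly (n + 1) 0 z
      = 8 * (n + 1) * Apoly (n + 1) 1 z + (4 * n + 3) * (-z) * Apoly n 0 z := by
  rw [Apoly_eq_sum, Apoly_eq_sum, Apoly_eq_sum]
  exact mul_sum_range_succ_eq_of_recurrence _ (by exact_mod_cast aCoeff_succ_zero_zero n)
    fun k _ => by exact_mod_cast aCoeff_succ_zero_succ n k

theorem Bpoly_succ_zero (n : ℕ) (z : ℂ) :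
    4 * ((n : ℂ) + 1) * Bpoly (n + 1) 0 z
      = 8 * (n + 1) * Bpoly (n + 1) 1 z + (4 * n + 3) * (-z) * Bpoly n 0 z := by
  have hext : Bpoly (n + 1) 1 z
      = ∑ m ∈ range (n + 2), (bCoeff (n + 1) 1 m : ℂ) * (-z) ^ m := by
    rw [sum_range_succ, bCoeff_one_eq_zero_above_degree, Complex.ofReal_zero, zero_mul,
      add_zero]
    rfl
  rw [Bpoly_eq_sum, hext, Bpoly_eq_sum]
  exact mul_sum_range_succ_eq_of_recurrence _ (by exact_mod_cast bCoeff_succ_zero_zero n)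
    fun k _ => by exact_mod_cast bCoeff_succ_zero_succ n k

noncomputable def padeDet (r s : ℕ) (z : ℂ) : ℂ :=
  Apoly r 0 z * Bpoly s 1 z - Apoly s 1 z * Bpoly r 0 z

theorem padeDet_succ_right (n : ℕ) (z : ℂ) :
    4 * ((n : ℂ) + 2) * padeDet (n + 1) (n + 2) z
      = (4 * n + 5) * (-z) * padeDet (n + 1) (n + 1) z := by
  unfold padeDet
  linear_combination
    Apoly (n + 1) 0 z * Bpoly_succ_one n z - Bpoly (n + 1) 0 z * Apoly_succ_one n z

theorem padeDet_succ_succ (n : ℕ) (z : ℂ) :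
    4 * ((n : ℂ) + 1) * padeDet (n + 1) (n + 1) z
      = (4 * n + 3) * (-z) * padeDet n (n + 1) z := by
  unfold padeDet
  linear_combination
    Bpoly (n + 1) 1 z * Apoly_succ_zero n z - Apoly (n + 1) 1 z * Bpoly_succ_zero n z

theorem padeDet_one_one (z : ℂ) : padeDet 1 1 z = -3 / 16 * z ^ 2 := by
  norm_num [padeDet, Apoly, Bpoly, genChoose, sum_range_succ, prod_range_succ]
  ring

theorem padeDet_succ_right_ne_zero {n : ℕ} {z : ℂ} (hz : z ≠ 0)
    (h : padeDet (n + 1) (n + 1) z ≠ 0) : padeDet (n + 1) (n + 2) z ≠ 0 := by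
  refine right_ne_zero_of_mul (a := 4 * ((n : ℂ) + 2)) ?_
  rw [padeDet_succ_right]
  exact mul_ne_zero (mul_ne_zero (by norm_cast) (neg_ne_zero.2 hz)) h

theorem padeDet_succ_succ_ne_zero {n : ℕ} {z : ℂ} (hz : z ≠ 0)
    (h : padeDet n (n + 1) z ≠ 0) : padeDet (n + 1) (n + 1) z ≠ 0 := by
  refine right_ne_zero_of_mul (a := 4 * ((n : ℂ) + 1)) ?_
  rw [padeDet_succ_succ]
  exact mul_ne_zero (mul_ne_zero (by norm_cast) (neg_ne_zero.2 hz)) h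

theorem padeDet_self_ne_zero (n : ℕ) {z : ℂ} (hz : z ≠ 0) :
    padeDet (n + 1) (n + 1) z ≠ 0 := by
  induction n with
  | zero => simpa [padeDet_one_one] using hz
  | succ n ih => exact padeDet_succ_succ_ne_zero hz (padeDet_succ_right_ne_zero hz ih)

/-- Non-vanishing of the "Wronskian": for `z ≠ 0`,
`A_{r,0}(z) B_{r+h,1}(z) - A_{r+h,1}(z) B_{r,0}(z) ≠ 0`. -/
theorem pade_nonvanishing (r : ℕ) (hr : 0 < r) (h : ℕ) (hh : h = 0 ∨ h = 1)
    (z : ℂ) (hz : z ≠ 0) :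
    Apoly r 0 z * Bpoly (r + h) 1 z - Apoly (r + h) 1 z * Bpoly r 0 z ≠ 0 := by
  obtain ⟨n, rfl⟩ := Nat.exists_eq_add_one_of_ne_zero hr.ne'
  rcases hh with rfl | rfl
  · exact padeDet_self_ne_zero n hz
  · exact padeDet_succ_right_ne_zero hz (padeDet_self_ne_zero n hz)
end

section
/- For every positive integer r: C(r − 3/4, r)·C(r − 1/4, r) < 1/(√2·π·r). -/
lemma prod_eq_gamma (c : ℝ) (hc : 0 < c) (n : ℕ) :
    ∏ i ∈ Finset.range n, (c + i) = Real.Gamma (c + n) / Real.Gamma c := by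
  induction n with
  | zero => simp [div_self (Real.Gamma_pos_of_pos hc).ne']
  | succ n ih =>
      rw [Finset.prod_range_succ, ih]
      have h : Real.Gamma (c + (n + 1 : ℕ)) = (c + n) * Real.Gamma (c + n) := by
        have h2 := Real.Gamma_add_one (s := c + n) (by positivity)
        rw [← h2]; push_cast; ring_nf
      rw [h]
      have := (Real.Gamma_pos_of_pos hc).ne'
      field_simp

lemma prod_reflect (r : ℕ) (c : ℝ) :
    ∏ i ∈ Finset.range r, ((r : ℝ) - c - i) = ∏ i ∈ Finset.range r, ((1 - c) + i) := by
  rw [← Finset.prod_range_reflect (fun j => ((1 : ℝ) - c + j)) r]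
  apply Finset.prod_congr rfl
  intro i hi
  rw [Finset.mem_range] at hi
  have h : ((r - 1 - i : ℕ) : ℝ) = (r : ℝ) - 1 - i := by
    have h1 : (1 : ℕ) + i ≤ r := by omega
    rw [Nat.sub_sub, Nat.cast_sub h1]; push_cast; ring
  simp only [h]; ring

lemma gamma_key {x : ℝ} (hx : 0 < x) :
    Real.Gamma (x + 1/4) * Real.Gamma (x + 3/4) ≤ Real.Gamma x * Real.Gamma (x + 1) := by
  have hx1 : (0:ℝ) < x + 1 := by linarith
  have h1 := Real.Gamma_mul_add_mul_le_rpow_Gamma_mul_rpow_Gamma hx hx1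
    (by norm_num : (0:ℝ) < 3/4) (by norm_num : (0:ℝ) < 1/4) (by norm_num)
  have h2 := Real.Gamma_mul_add_mul_le_rpow_Gamma_mul_rpow_Gamma hx hx1
    (by norm_num : (0:ℝ) < 1/4) (by norm_num : (0:ℝ) < 3/4) (by norm_num)
  rw [show 3/4 * x + 1/4 * (x+1) = x + 1/4 by ring] at h1
  rw [show 1/4 * x + 3/4 * (x+1) = x + 3/4 by ring] at h2
  have hg := Real.Gamma_pos_of_pos hx
  have hg1 := Real.Gamma_pos_of_pos hx1
  calc Real.Gamma (x+1/4) * Real.Gamma (x+3/4)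
      ≤ (Real.Gamma x ^ (3/4:ℝ) * Real.Gamma (x+1) ^ (1/4:ℝ)) *
        (Real.Gamma x ^ (1/4:ℝ) * Real.Gamma (x+1) ^ (3/4:ℝ)) := by
        exact mul_le_mul h1 h2 (Real.Gamma_pos_of_pos (by linarith)).le (by positivity)
    _ = Real.Gamma x * Real.Gamma (x+1) := by
        rw [mul_mul_mul_comm, ← Real.rpow_add hg, ← Real.rpow_add hg1]
        norm_num

lemma gamma_strict {x : ℝ} (hx : 0 < x) :
    Real.Gamma (x + 1/4) * Real.Gamma (x + 3/4) < Real.Gamma x * Real.Gamma (x + 1) := by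
  have hk := gamma_key (x := x + 1) (by linarith)
  have ha : Real.Gamma (x + 1 + 1/4) = (x + 1/4) * Real.Gamma (x + 1/4) := by
    have h := Real.Gamma_add_one (s := x + 1/4) (by positivity)
    rw [← h]; ring_nf
  have hb : Real.Gamma (x + 1 + 3/4) = (x + 3/4) * Real.Gamma (x + 3/4) := by
    have h := Real.Gamma_add_one (s := x + 3/4) (by positivity)
    rw [← h]; ring_nf
  have hc : Real.Gamma (x + 1) = x * Real.Gamma x := Real.Gamma_add_one hx.ne'
  have hd : Real.Gamma (x + 1 + 1) = (x + 1) * Real.Gamma (x + 1) := by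
    exact Real.Gamma_add_one (by positivity)
  rw [ha, hb, hd, hc] at hk
  rw [hc]
  have hg := Real.Gamma_pos_of_pos hx
  nlinarith [mul_pos (Real.Gamma_pos_of_pos (show (0:ℝ) < x + 1/4 by linarith))
    (Real.Gamma_pos_of_pos (show (0:ℝ) < x + 3/4 by linarith)), mul_pos hg hg, sq_nonneg x]

/-- For every positive integer `r`, `C(r-3/4, r) C(r-1/4, r) < 1/(√2 π r)`. -/
theorem genChoose_prod_lt (r : ℕ) (hr : 0 < r) :
    genChoose ((r : ℝ) - 3/4) r * genChoose ((r : ℝ) - 1/4) r <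
      1 / (Real.sqrt 2 * Real.pi * r) := by
  have hπ := Real.pi_pos
  have hrR : (0:ℝ) < r := Nat.cast_pos.mpr hr
  have hs2 : (0:ℝ) < Real.sqrt 2 := Real.sqrt_pos.mpr (by norm_num)
  have hs2' : Real.sqrt 2 * Real.sqrt 2 = 2 := Real.mul_self_sqrt (by norm_num)
  have hS : Real.Gamma (1/4) * Real.Gamma (3/4) = Real.sqrt 2 * Real.pi := by
    have h := Real.Gamma_mul_Gamma_one_sub (1/4)
    rw [show (1:ℝ) - 1/4 = 3/4 by norm_num,
      show Real.pi * (1/4) = Real.pi / 4 by ring, Real.sin_pi_div_four] at h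
    rw [h, div_eq_iff (by positivity : (Real.sqrt 2 / 2 : ℝ) ≠ 0)]
    nlinarith
  have e14 : ∏ i ∈ Finset.range r, ((r : ℝ) - 3/4 - i)
      = Real.Gamma (1/4 + r) / Real.Gamma (1/4) := by
    rw [prod_reflect r (3/4), show (1:ℝ) - 3/4 = 1/4 by norm_num,
      prod_eq_gamma (1/4) (by norm_num) r]
  have e34 : ∏ i ∈ Finset.range r, ((r : ℝ) - 1/4 - i)
      = Real.Gamma (3/4 + r) / Real.Gamma (3/4) := by
    rw [prod_reflect r (1/4), show (1:ℝ) - 1/4 = 3/4 by norm_num,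
      prod_eq_gamma (3/4) (by norm_num) r]
  have hF : (r.factorial : ℝ) = Real.Gamma (r + 1) := (Real.Gamma_nat_eq_factorial r).symm
  unfold genChoose
  rw [e14, e34, hF, div_div, div_div, div_mul_div_comm]
  have hg14 := Real.Gamma_pos_of_pos (show (0:ℝ) < 1/4 by norm_num)
  have hg34 := Real.Gamma_pos_of_pos (show (0:ℝ) < 3/4 by norm_num)
  have hgr1 := Real.Gamma_pos_of_pos (show (0:ℝ) < (r:ℝ) + 1 by linarith)
  have hgr := Real.Gamma_pos_of_pos hrR
  rw [div_lt_div_iff₀ (by positivity) (by positivity)]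
  have strict := gamma_strict hrR
  calc Real.Gamma (1/4 + r) * Real.Gamma (3/4 + r) * (Real.sqrt 2 * Real.pi * r)
      = (Real.sqrt 2 * Real.pi) *
        ((r:ℝ) * (Real.Gamma ((r:ℝ) + 1/4) * Real.Gamma ((r:ℝ) + 3/4))) := by
        rw [add_comm (1/4 : ℝ) (r:ℝ), add_comm (3/4 : ℝ) (r:ℝ)]; ring
    _ < (Real.sqrt 2 * Real.pi) * ((r:ℝ) * (Real.Gamma r * Real.Gamma ((r:ℝ) + 1))) := by
        apply mul_lt_mul_of_pos_left (mul_lt_mul_of_pos_left strict hrR) (by positivity)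
    _ = (Real.sqrt 2 * Real.pi) * (Real.Gamma ((r:ℝ)+1) * Real.Gamma ((r:ℝ)+1)) := by
        rw [Real.Gamma_add_one hrR.ne']; ring
    _ = 1 * (Real.Gamma (1/4) * Real.Gamma ((r:ℝ)+1) *
        (Real.Gamma (3/4) * Real.Gamma ((r:ℝ)+1))) := by
        rw [← hS]; ring
end

section
/- For every integer t ≥ 18, the quartic polynomial P_t(x,1) = x^4 + 4t·x^3 − 6t·x^2 − 4t^2·x + t^2 has four real roots β_1, β_2, β_3, β_4 satisfying: √t + 1/2 + 1/(8√t) − 2/(8t) < β_1 < √t + 1/2 + 1/(8√t) − 1/(8t); −√t + 1/2 − 1/(8√t) − 1/(8t) < β_2 < −√t + 1/2 − 1/(8√t); 1/4 − 5/(64t) + 22/(512t^2) < β_3 < 1/4 − 5/(64t) + 23/(512t^2); and −4t − 5/4 + 21/(64t) − 87/(512t^2) < β_4 < −4t − 5/4 + 21/(64t) − 84/(512t^2). -/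
private lemma sign_b1low {s : ℝ} (hs : 4 < s) :
    (s + 1/2 + 1/(8*s) - 2/(8*s^2))^4 + 4*s^2*(s + 1/2 + 1/(8*s) - 2/(8*s^2))^3 - 6*s^2*(s + 1/2 + 1/(8*s) - 2/(8*s^2))^2 - 4*(s^2)^2*(s + 1/2 + 1/(8*s) - 2/(8*s^2)) + (s^2)^2 < 0 := by
  have h0 : (0:ℝ) < s := by linarith
  have hne : s ≠ 0 := ne_of_gt h0
  have hu : (0:ℝ) ≤ s - 4 := by linarith
  rw [show (s + 1/2 + 1/(8*s) - 2/(8*s^2))^4 + 4*s^2*(s + 1/2 + 1/(8*s) - 2/(8*s^2))^3 - 6*s^2*(s + 1/2 + 1/(8*s) - 2/(8*s^2))^2 - 4*(s^2)^2*(s + 1/2 + 1/(8*s) - 2/(8*s^2)) + (s^2)^2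
      = ((16) + (-32)*s + (-104)*s^2 + (-72)*s^3 + (417)*s^4 + (1360)*s^5 + (-576)*s^6 + (-864)*s^7 + (-3968)*s^8 + (256)*s^9 + (-4096)*s^10) / (4096 * s^8) by field_simp; ring]
  apply div_neg_of_neg_of_pos
  · nlinarith [pow_nonneg hu 2, pow_nonneg hu 3, pow_nonneg hu 4, pow_nonneg hu 5, pow_nonneg hu 6, pow_nonneg hu 7, pow_nonneg hu 8, pow_nonneg hu 9, pow_nonneg hu 10]
  · positivity

private lemma sign_b1up {s : ℝ} (hs : 4 < s) :
    (s + 1/2 + 1/(8*s) - 1/(8*s^2))^4 + 4*s^2*(s + 1/2 + 1/(8*s) - 1/(8*s^2))^3 - 6*s^2*(s + 1/2 + 1/(8*s) - 1/(8*s^2))^2 - 4*(s^2)^2*(s + 1/2 + 1/(8*s) - 1/(8*s^2)) + (s^2)^2 > 0 := by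
  have h0 : (0:ℝ) < s := by linarith
  have hne : s ≠ 0 := ne_of_gt h0
  have hu : (0:ℝ) ≤ s - 4 := by linarith
  rw [show (s + 1/2 + 1/(8*s) - 1/(8*s^2))^4 + 4*s^2*(s + 1/2 + 1/(8*s) - 1/(8*s^2))^3 - 6*s^2*(s + 1/2 + 1/(8*s) - 1/(8*s^2))^2 - 4*(s^2)^2*(s + 1/2 + 1/(8*s) - 1/(8*s^2)) + (s^2)^2
      = ((1) + (-4)*s + (-10)*s^2 + (12)*s^3 + (113)*s^4 + (208)*s^5 + (-608)*s^6 + (-864)*s^7 + (-896)*s^8 + (2304)*s^9) / (4096 * s^8) by field_simp; ring]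
  apply div_pos
  · nlinarith [pow_nonneg hu 2, pow_nonneg hu 3, pow_nonneg hu 4, pow_nonneg hu 5, pow_nonneg hu 6, pow_nonneg hu 7, pow_nonneg hu 8, pow_nonneg hu 9]
  · positivity

private lemma sign_b2low {s : ℝ} (hs : 4 < s) :
    (-s + 1/2 - 1/(8*s) - 1/(8*s^2))^4 + 4*s^2*(-s + 1/2 - 1/(8*s) - 1/(8*s^2))^3 - 6*s^2*(-s + 1/2 - 1/(8*s) - 1/(8*s^2))^2 - 4*(s^2)^2*(-s + 1/2 - 1/(8*s) - 1/(8*s^2)) + (s^2)^2 < 0 := by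
  have h0 : (0:ℝ) < s := by linarith
  have hne : s ≠ 0 := ne_of_gt h0
  have hu : (0:ℝ) ≤ s - 4 := by linarith
  rw [show (-s + 1/2 - 1/(8*s) - 1/(8*s^2))^4 + 4*s^2*(-s + 1/2 - 1/(8*s) - 1/(8*s^2))^3 - 6*s^2*(-s + 1/2 - 1/(8*s) - 1/(8*s^2))^2 - 4*(s^2)^2*(-s + 1/2 - 1/(8*s) - 1/(8*s^2)) + (s^2)^2
      = ((1) + (4)*s + (-10)*s^2 + (-12)*s^3 + (113)*s^4 + (-208)*s^5 + (-608)*s^6 + (864)*s^7 + (-896)*s^8 + (-2304)*s^9) / (4096 * s^8) by field_simp; ring]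
  apply div_neg_of_neg_of_pos
  · nlinarith [pow_nonneg hu 2, pow_nonneg hu 3, pow_nonneg hu 4, pow_nonneg hu 5, pow_nonneg hu 6, pow_nonneg hu 7, pow_nonneg hu 8, pow_nonneg hu 9]
  · positivity

private lemma sign_b2up {s : ℝ} (hs : 4 < s) :
    (-s + 1/2 - 1/(8*s))^4 + 4*s^2*(-s + 1/2 - 1/(8*s))^3 - 6*s^2*(-s + 1/2 - 1/(8*s))^2 - 4*(s^2)^2*(-s + 1/2 - 1/(8*s)) + (s^2)^2 > 0 := by
  have h0 : (0:ℝ) < s := by linarith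
  have hne : s ≠ 0 := ne_of_gt h0
  have hu : (0:ℝ) ≤ s - 4 := by linarith
  rw [show (-s + 1/2 - 1/(8*s))^4 + 4*s^2*(-s + 1/2 - 1/(8*s))^3 - 6*s^2*(-s + 1/2 - 1/(8*s))^2 - 4*(s^2)^2*(-s + 1/2 - 1/(8*s)) + (s^2)^2
      = ((1)*s^4 + (-16)*s^5 + (128)*s^6 + (-672)*s^7 + (2176)*s^8 + (-4352)*s^9 + (4096)*s^10) / (4096 * s^8) by field_simp; ring]
  apply div_pos
  · nlinarith [pow_nonneg hu 2, pow_nonneg hu 3, pow_nonneg hu 4, pow_nonneg hu 5, pow_nonneg hu 6, pow_nonneg hu 7, pow_nonneg hu 8, pow_nonneg hu 9, pow_nonneg hu 10]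
  · positivity

private lemma sign_b3low {T : ℝ} (hT : 18 ≤ T) :
    (1/4 - 5/(64*T) + 22/(512*T^2))^4 + 4*T*(1/4 - 5/(64*T) + 22/(512*T^2))^3 - 6*T*(1/4 - 5/(64*T) + 22/(512*T^2))^2 - 4*T^2*(1/4 - 5/(64*T) + 22/(512*T^2)) + T^2 > 0 := by
  have h0 : (0:ℝ) < T := by linarith
  have hne : T ≠ 0 := ne_of_gt h0
  have hu : (0:ℝ) ≤ T - 18 := by linarith
  rw [show (1/4 - 5/(64*T) + 22/(512*T^2))^4 + 4*T*(1/4 - 5/(64*T) + 22/(512*T^2))^3 - 6*T*(1/4 - 5/(64*T) + 22/(512*T^2))^2 - 4*T^2*(1/4 - 5/(64*T) + 22/(512*T^2)) + T^2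
      = ((234256) + (-1703680)*T + (10098176)*T^2 + (-13561856)*T^3 + (-14741504)*T^4 + (-370147328)*T^5 + (1594884096)*T^6 + (-8237613056)*T^7 + (536870912)*T^8) / (68719476736 * T^8) by field_simp; ring]
  apply div_pos
  · nlinarith [pow_nonneg hu 2, pow_nonneg hu 3, pow_nonneg hu 4, pow_nonneg hu 5, pow_nonneg hu 6, pow_nonneg hu 7, pow_nonneg hu 8]
  · positivity

private lemma sign_b3up {T : ℝ} (hT : 18 ≤ T) :
    (1/4 - 5/(64*T) + 23/(512*T^2))^4 + 4*T*(1/4 - 5/(64*T) + 23/(512*T^2))^3 - 6*T*(1/4 - 5/(64*T) + 23/(512*T^2))^2 - 4*T^2*(1/4 - 5/(64*T) + 23/(512*T^2)) + T^2 < 0 := by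
  have h0 : (0:ℝ) < T := by linarith
  have hne : T ≠ 0 := ne_of_gt h0
  have hu : (0:ℝ) ≤ T - 18 := by linarith
  rw [show (1/4 - 5/(64*T) + 23/(512*T^2))^4 + 4*T*(1/4 - 5/(64*T) + 23/(512*T^2))^3 - 6*T*(1/4 - 5/(64*T) + 23/(512*T^2))^2 - 4*T^2*(1/4 - 5/(64*T) + 23/(512*T^2)) + T^2
      = ((279841) + (-1946720)*T + (11307904)*T^2 + (-13471744)*T^3 + (-18919424)*T^4 + (-403570688)*T^5 + (1666187264)*T^6 + (-8539602944)*T^7) / (68719476736 * T^8) by field_simp; ring]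
  apply div_neg_of_neg_of_pos
  · nlinarith [pow_nonneg hu 2, pow_nonneg hu 3, pow_nonneg hu 4, pow_nonneg hu 5, pow_nonneg hu 6, pow_nonneg hu 7]
  · positivity

private lemma sign_b4low {T : ℝ} (hT : 18 ≤ T) :
    (-4*T - 5/4 + 21/(64*T) - 87/(512*T^2))^4 + 4*T*(-4*T - 5/4 + 21/(64*T) - 87/(512*T^2))^3 - 6*T*(-4*T - 5/4 + 21/(64*T) - 87/(512*T^2))^2 - 4*T^2*(-4*T - 5/4 + 21/(64*T) - 87/(512*T^2)) + T^2 > 0 := by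
  have h0 : (0:ℝ) < T := by linarith
  have hne : T ≠ 0 := ne_of_gt h0
  have hu : (0:ℝ) ≤ T - 18 := by linarith
  rw [show (-4*T - 5/4 + 21/(64*T) - 87/(512*T^2))^4 + 4*T*(-4*T - 5/4 + 21/(64*T) - 87/(512*T^2))^3 - 6*T*(-4*T - 5/4 + 21/(64*T) - 87/(512*T^2))^2 - 4*T^2*(-4*T - 5/4 + 21/(64*T) - 87/(512*T^2)) + T^2
      = ((57289761) + (-442514016)*T + (2967532416)*T^2 + (-7370072064)*T^3 + (14818332672)*T^4 + (38662963200)*T^5 + (-72159854592)*T^6 + (226240757760)*T^7 + (480231030784)*T^8) / (68719476736 * T^8) by field_simp; ring]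
  apply div_pos
  · nlinarith [pow_nonneg hu 2, pow_nonneg hu 3, pow_nonneg hu 4, pow_nonneg hu 5, pow_nonneg hu 6, pow_nonneg hu 7, pow_nonneg hu 8]
  · positivity

private lemma sign_b4up {T : ℝ} (hT : 18 ≤ T) :
    (-4*T - 5/4 + 21/(64*T) - 84/(512*T^2))^4 + 4*T*(-4*T - 5/4 + 21/(64*T) - 84/(512*T^2))^3 - 6*T*(-4*T - 5/4 + 21/(64*T) - 84/(512*T^2))^2 - 4*T^2*(-4*T - 5/4 + 21/(64*T) - 84/(512*T^2)) + T^2 < 0 := by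
  have h0 : (0:ℝ) < T := by linarith
  have hne : T ≠ 0 := ne_of_gt h0
  have hu : (0:ℝ) ≤ T - 18 := by linarith
  rw [show (-4*T - 5/4 + 21/(64*T) - 84/(512*T^2))^4 + 4*T*(-4*T - 5/4 + 21/(64*T) - 84/(512*T^2))^3 - 6*T*(-4*T - 5/4 + 21/(64*T) - 84/(512*T^2))^2 - 4*T^2*(-4*T - 5/4 + 21/(64*T) - 84/(512*T^2)) + T^2
      = ((49787136) + (-398297088)*T + (2712213504)*T^2 + (-7055548416)*T^3 + (14495846400)*T^4 + (34334834688)*T^5 + (-71455211520)*T^6 + (222314889216)*T^7 + (449629388800)*T^8 + (-25769803776)*T^9) / (68719476736 * T^8) by field_simp; ring]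
  apply div_neg_of_neg_of_pos
  · nlinarith [pow_nonneg hu 2, pow_nonneg hu 3, pow_nonneg hu 4, pow_nonneg hu 5, pow_nonneg hu 6, pow_nonneg hu 7, pow_nonneg hu 8, pow_nonneg hu 9]
  · positivity

private lemma root_np {T a b : ℝ} (hab : a ≤ b)
    (ha : a^4 + 4*T*a^3 - 6*T*a^2 - 4*T^2*a + T^2 < 0)
    (hb : b^4 + 4*T*b^3 - 6*T*b^2 - 4*T^2*b + T^2 > 0) :
    ∃ β, a < β ∧ β < b ∧ β^4 + 4*T*β^3 - 6*T*β^2 - 4*T^2*β + T^2 = 0 := by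
  have hf : Continuous fun x : ℝ => x^4 + 4*T*x^3 - 6*T*x^2 - 4*T^2*x + T^2 := by continuity
  obtain ⟨β, hβ, h0⟩ := intermediate_value_Ioo hab hf.continuousOn ⟨ha, hb⟩
  exact ⟨β, hβ.1, hβ.2, h0⟩

private lemma root_pn {T a b : ℝ} (hab : a ≤ b)
    (ha : a^4 + 4*T*a^3 - 6*T*a^2 - 4*T^2*a + T^2 > 0)
    (hb : b^4 + 4*T*b^3 - 6*T*b^2 - 4*T^2*b + T^2 < 0) :
    ∃ β, a < β ∧ β < b ∧ β^4 + 4*T*β^3 - 6*T*β^2 - 4*T^2*β + T^2 = 0 := by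
  have hf : Continuous fun x : ℝ => x^4 + 4*T*x^3 - 6*T*x^2 - 4*T^2*x + T^2 := by continuity
  obtain ⟨β, hβ, h0⟩ := intermediate_value_Ioo' hab hf.continuousOn ⟨hb, ha⟩
  exact ⟨β, hβ.1, hβ.2, h0⟩

/-- For every integer `t ≥ 18`, the quartic polynomial
`P_t(x,1) = x^4 + 4t x^3 - 6t x^2 - 4t^2 x + t^2` has four real roots
`β₁, β₂, β₃, β₄` lying in the indicated intervals. -/
theorem quartic_roots_location (t : ℤ) (ht : 18 ≤ t) :
    ∃ β₁ β₂ β₃ β₄ : ℝ,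
      (∀ β ∈ ([β₁, β₂, β₃, β₄] : List ℝ),
        β ^ 4 + 4 * (t : ℝ) * β ^ 3 - 6 * (t : ℝ) * β ^ 2 - 4 * (t : ℝ) ^ 2 * β + (t : ℝ) ^ 2 = 0) ∧
      (Real.sqrt t + 1/2 + 1/(8 * Real.sqrt t) - 2/(8 * (t : ℝ)) < β₁ ∧
        β₁ < Real.sqrt t + 1/2 + 1/(8 * Real.sqrt t) - 1/(8 * (t : ℝ))) ∧
      (-Real.sqrt t + 1/2 - 1/(8 * Real.sqrt t) - 1/(8 * (t : ℝ)) < β₂ ∧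
        β₂ < -Real.sqrt t + 1/2 - 1/(8 * Real.sqrt t)) ∧
      (1/4 - 5/(64 * (t : ℝ)) + 22/(512 * (t : ℝ) ^ 2) < β₃ ∧
        β₃ < 1/4 - 5/(64 * (t : ℝ)) + 23/(512 * (t : ℝ) ^ 2)) ∧
      (-4 * (t : ℝ) - 5/4 + 21/(64 * (t : ℝ)) - 87/(512 * (t : ℝ) ^ 2) < β₄ ∧
        β₄ < -4 * (t : ℝ) - 5/4 + 21/(64 * (t : ℝ)) - 84/(512 * (t : ℝ) ^ 2)) := by
  have hT : (18:ℝ) ≤ (t:ℝ) := by exact_mod_cast ht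
  have hT0 : (0:ℝ) < (t:ℝ) := by linarith
  set s : ℝ := Real.sqrt (t:ℝ) with hsdef
  have hs2 : s^2 = (t:ℝ) := Real.sq_sqrt hT0.le
  have hsnn : (0:ℝ) ≤ s := Real.sqrt_nonneg _
  have hs4 : (4:ℝ) < s := by nlinarith
  have h8t : (0:ℝ) < 1/(8*(t:ℝ)) := one_div_pos.mpr (by linarith)
  have h512 : (0:ℝ) < 1/(512*(t:ℝ)^2) := one_div_pos.mpr (by positivity)
  -- β₁
  have ha1 := sign_b1low hs4
  have hb1 := sign_b1up hs4
  rw [hs2] at ha1 hb1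
  obtain ⟨β₁, h1⟩ := root_np (by linarith [h8t, show (2:ℝ)/(8*(t:ℝ)) = 1/(8*(t:ℝ)) + 1/(8*(t:ℝ)) from by ring]) ha1 hb1
  -- β₂
  have ha2 := sign_b2low hs4
  have hb2 := sign_b2up hs4
  rw [hs2] at ha2 hb2
  obtain ⟨β₂, h2⟩ := root_np (by linarith [h8t]) ha2 hb2
  -- β₃
  have ha3 := sign_b3low (T := (t:ℝ)) hT
  have hb3 := sign_b3up (T := (t:ℝ)) hT
  obtain ⟨β₃, h3⟩ := root_pn (by linarith [h512, show (23:ℝ)/(512*(t:ℝ)^2) = 22/(512*(t:ℝ)^2) + 1/(512*(t:ℝ)^2) from by ring]) ha3 hb3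
  -- β₄
  have ha4 := sign_b4low (T := (t:ℝ)) hT
  have hb4 := sign_b4up (T := (t:ℝ)) hT
  obtain ⟨β₄, h4⟩ := root_pn (by linarith [h512, show (87:ℝ)/(512*(t:ℝ)^2) = 84/(512*(t:ℝ)^2) + 3/(512*(t:ℝ)^2) from by ring, show (3:ℝ)/(512*(t:ℝ)^2) = 3*(1/(512*(t:ℝ)^2)) from by ring]) ha4 hb4
  refine ⟨β₁, β₂, β₃, β₄, ?_, ⟨h1.1, h1.2.1⟩, ⟨h2.1, h2.2.1⟩, ⟨h3.1, h3.2.1⟩, ⟨h4.1, h4.2.1⟩⟩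
  intro β hβ
  simp only [List.mem_cons, List.not_mem_nil, or_false] at hβ
  rcases hβ with rfl | rfl | rfl | rfl
  exacts [h1.2.2, h2.2.2, h3.2.2, h4.2.2]
end
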